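/- arXiv:1709.04895 — 2 statements merged into one kernel-verified Lean document; each statement's English description precedes it below -/
import Mathlib

section
/- Let G be a simple graph on n vertices with a designated Hamiltonian cycle C, let S be a set of independent chords of G, and let t ≥ 1. If Q_S contains a chain of size t, then some chord in this chain has an exterior containing at most n/t vertices; consequently, G contains a nontrivial cycle of length at least n − n/t. -/
/-!  We formalize "a graph `G` on `n` vertices with a designated Hamiltonian cycle `C`
(with a fixed cyclic orientation)" by taking the vertex set to be `ZMod n` (with `3 ≤ n`)
and the designated Hamiltonian cycle to be `0, 1, 2, ..., n-1, 0`, which is a Hamiltonian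
cycle of `G` thanks to the hypothesis `∀ i : ZMod n, G.Adj i (i + 1)`.  -/

/-- The length of the path from `x` to `y` along the designated Hamiltonian cycle,
following the fixed orientation; this is `d_C(x, y)`. -/
def dC {n : ℕ} (x y : ZMod n) : ℕ := (y - x).val

/-- `CBtw x y z` formalizes `x ≺ y ≺ z`: traversing the cycle starting from `x`
(in the fixed orientation), one meets `y` (strictly after `x`) and then `z`. -/
def CBtw {n : ℕ} (x y z : ZMod n) : Prop := 0 < dC x y ∧ dC x y < dC x z

/-- The set of vertices on the path from `a` to `b` along the cycle (following the
orientation), inclusive of both endpoints.  The two *domains* of a chord `{a, b}` are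
`arc a b` and `arc b a`. -/
def arc {n : ℕ} (a b : ZMod n) : Set (ZMod n) := {v | dC a v ≤ dC a b}

/-- The edge set of the designated Hamiltonian cycle. -/
def stdEdges (n : ℕ) : Set (Sym2 (ZMod n)) := {e | ∃ i : ZMod n, e = s(i, i + 1)}

/-- `{a, b}` is a chord of `G`: an edge of `G` not belonging to the designated
Hamiltonian cycle. -/
def IsChordPair {n : ℕ} (G : SimpleGraph (ZMod n)) (a b : ZMod n) : Prop :=
  G.Adj a b ∧ s(a, b) ∉ stdEdges n

/-- The chords `{a, b}` and `{x, y}` interlace: their endpoints are distinct and appear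
in alternating order around the cycle. -/
def Interlace {n : ℕ} (a b x y : ZMod n) : Prop :=
  (CBtw a x b ∧ CBtw b y a) ∨ (CBtw a y b ∧ CBtw b x a)

/-- `G` contains a cycle, distinct from the designated Hamiltonian cycle
(i.e. a *nontrivial* cycle), of length at least `L`. -/
def HasNontrivialCycleOfLength {n : ℕ} (G : SimpleGraph (ZMod n)) (L : ℝ) : Prop :=
  ∃ (w : ZMod n) (W : G.Walk w w), W.IsCycle ∧
    {e | e ∈ W.edges} ≠ stdEdges n ∧ L ≤ (W.length : ℝ)

/-- `S` is a set of independent chords of `G`: every element is a chord, and no two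
distinct chords in `S` share an endpoint.  (Chords are recorded as ordered pairs of
endpoints.) -/
def IndepChords {n : ℕ} (G : SimpleGraph (ZMod n)) (S : Finset (ZMod n × ZMod n)) : Prop :=
  (∀ e ∈ S, IsChordPair G e.1 e.2) ∧
  (∀ e ∈ S, ∀ e' ∈ S, e ≠ e' →
    e.1 ≠ e'.1 ∧ e.1 ≠ e'.2 ∧ e.2 ≠ e'.1 ∧ e.2 ≠ e'.2)

/-- The *interior* of the chord `{a, b}` with respect to the fixed cycle edge
`f = {f0, f0 + 1}`: the domain of the chord containing both endpoints of `f`. -/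
def interiorD {n : ℕ} (f0 a b : ZMod n) : Set (ZMod n) :=
  if dC a f0 ≤ dC a b ∧ dC a (f0 + 1) ≤ dC a b then arc a b else arc b a

/-- The *exterior* of the chord `{a, b}` with respect to the fixed cycle edge
`f = {f0, f0 + 1}`: the domain of the chord other than its interior. -/
def exteriorD {n : ℕ} (f0 a b : ZMod n) : Set (ZMod n) :=
  if dC a f0 ≤ dC a b ∧ dC a (f0 + 1) ≤ dC a b then arc b a else arc a b

/-- The position of `v` in the linear order `L` on the vertices obtained by starting at
the endpoint `f0 + 1` of the fixed cycle edge `f = {f0, f0 + 1}` and following the cycle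
to its other endpoint `f0`. -/
def posL {n : ℕ} (f0 v : ZMod n) : ℕ := dC (f0 + 1) v

/-- The strict order of the poset `P_S`:  `e1 < e2` iff the interior of `e1` is
(strictly) contained in the interior of `e2`. -/
def PRel {n : ℕ} (f0 : ZMod n) (e1 e2 : ZMod n × ZMod n) : Prop :=
  interiorD f0 e1.1 e1.2 ⊂ interiorD f0 e2.1 e2.2

/-- The strict order of the poset `Q_S`:  `e1 < e2` iff both endpoints of `e1` precede
both endpoints of `e2` in the linear order `L`. -/
def QRel {n : ℕ} (f0 : ZMod n) (e1 e2 : ZMod n × ZMod n) : Prop :=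
  posL f0 e1.1 < posL f0 e2.1 ∧ posL f0 e1.1 < posL f0 e2.2 ∧
  posL f0 e1.2 < posL f0 e2.1 ∧ posL f0 e1.2 < posL f0 e2.2

/-- `A` is a chain in the poset `P_S`. -/
def IsChainP {n : ℕ} (f0 : ZMod n) (A : Finset (ZMod n × ZMod n)) : Prop :=
  ∀ e ∈ A, ∀ e' ∈ A, e ≠ e' → PRel f0 e e' ∨ PRel f0 e' e

/-- `A` is a chain in the poset `Q_S`. -/
def IsChainQ {n : ℕ} (f0 : ZMod n) (A : Finset (ZMod n × ZMod n)) : Prop :=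
  ∀ e ∈ A, ∀ e' ∈ A, e ≠ e' → QRel f0 e e' ∨ QRel f0 e' e

/-- `A` is an antichain in the poset `P_S`. -/
def IsAntichainP {n : ℕ} (f0 : ZMod n) (A : Finset (ZMod n × ZMod n)) : Prop :=
  ∀ e ∈ A, ∀ e' ∈ A, e ≠ e' → ¬ PRel f0 e e' ∧ ¬ PRel f0 e' e

/-- `A` is an antichain in the poset `Q_S`. -/
def IsAntichainQ {n : ℕ} (f0 : ZMod n) (A : Finset (ZMod n × ZMod n)) : Prop :=
  ∀ e ∈ A, ∀ e' ∈ A, e ≠ e' → ¬ QRel f0 e e' ∧ ¬ QRel f0 e' e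

/-! Measured by position in `L`, the exterior of a chord is exactly the interval of positions
between its endpoints, because it is the domain avoiding `f`. Chords comparable in `Q_S` occupy
disjoint such intervals, so the exteriors of a chain of size `t` are disjoint sets of vertices
and one of them has at most `n / t` vertices. That chord, closed up by the path along `C`
through its interior, is a nontrivial cycle of length `n + 2 - |exterior|`. -/

section Positions

@[simp] lemma posL_self_add_one {n : ℕ} (f0 : ZMod n) : posL f0 (f0 + 1) = 0 := by
  simp [posL, dC]

variable {n : ℕ} [NeZero n] (f0 : ZMod n)

lemma posL_lt (v : ZMod n) : posL f0 v < n := ZMod.val_lt _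

lemma posL_injective : Function.Injective (posL f0) :=
  ZMod.val_injective n |>.comp (sub_left_injective (b := f0 + 1))

lemma range_posL : Set.range (posL f0) = Set.Iio n := by
  refine subset_antisymm (Set.range_subset_iff.mpr (posL_lt f0)) fun k (hk : k < n) => ?_
  exact ⟨f0 + 1 + k, by simp [posL, dC, ZMod.val_natCast_of_lt hk]⟩

@[simp] lemma posL_self : posL f0 f0 = n - 1 := by
  obtain ⟨m, rfl⟩ := Nat.exists_eq_add_one_of_ne_zero (NeZero.ne n)
  simp [posL, dC, ZMod.val_neg_one]

lemma natCast_posL_sub_posL (a v : ZMod n) :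
    ((posL f0 v : ZMod n) - posL f0 a) = v - a := by
  simp only [posL, dC, ZMod.natCast_zmod_val]
  ring

variable {f0}

lemma dC_eq_of_posL_le {a v : ZMod n} (h : posL f0 a ≤ posL f0 v) :
    dC a v = posL f0 v - posL f0 a := by
  rw [dC, ← natCast_posL_sub_posL f0, ← Nat.cast_sub h,
    ZMod.val_natCast_of_lt ((Nat.sub_le _ _).trans_lt (posL_lt f0 v))]

lemma dC_eq_of_posL_lt {a v : ZMod n} (h : posL f0 v < posL f0 a) :
    dC a v = posL f0 v + n - posL f0 a := by
  have ha := posL_lt f0 a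
  have hlt : posL f0 v + n - posL f0 a < n := by omega
  rw [dC, ← natCast_posL_sub_posL f0, ← ZMod.val_natCast_of_lt hlt,
    Nat.cast_sub (by omega), Nat.cast_add, ZMod.natCast_self, add_zero]

lemma arc_eq_preimage_Icc {x y : ZMod n} (h : posL f0 x ≤ posL f0 y) :
    arc x y = posL f0 ⁻¹' Set.Icc (posL f0 x) (posL f0 y) := by
  ext v
  simp only [arc, Set.mem_ofPred_eq, Set.mem_preimage, Set.mem_Icc, dC_eq_of_posL_le h]
  rcases le_or_gt (posL f0 x) (posL f0 v) with hv | hv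
  · rw [dC_eq_of_posL_le hv]; omega
  · rw [dC_eq_of_posL_lt hv]; have := posL_lt f0 y; omega

end Positions

def posInterval {n : ℕ} (f0 a b : ZMod n) : Finset ℕ :=
  Finset.Icc (min (posL f0 a) (posL f0 b)) (max (posL f0 a) (posL f0 b))

lemma posInterval_comm {n : ℕ} (f0 a b : ZMod n) : posInterval f0 a b = posInterval f0 b a := by
  rw [posInterval, posInterval, min_comm, max_comm]

section Exterior

variable {n : ℕ} [NeZero n] {f0 a b : ZMod n}

lemma dC_eq_pred_sub_posL : dC a f0 = n - 1 - posL f0 a := by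
  have := posL_lt f0 a
  rw [dC_eq_of_posL_le (f0 := f0) (by rw [posL_self]; omega), posL_self]

lemma dC_add_one_eq_sub_posL (ha : 0 < posL f0 a) : dC a (f0 + 1) = n - posL f0 a := by
  rw [dC_eq_of_posL_lt (f0 := f0) (by rwa [posL_self_add_one]), posL_self_add_one, zero_add]

lemma exteriorD_eq_arc_of_posL_lt (h : posL f0 a < posL f0 b) (hns : s(a, b) ∉ stdEdges n) :
    exteriorD f0 a b = arc a b := by
  have hbn := posL_lt f0 b
  rw [exteriorD, if_neg]
  -- the interior condition forces `a = f0 + 1` and `b = f0`, i.e. `{a, b} = f`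
  rintro ⟨h0, h1⟩
  rw [dC_eq_pred_sub_posL, dC_eq_of_posL_le h.le] at h0
  rw [dC_eq_of_posL_le h.le] at h1
  have hb : b = f0 := posL_injective f0 (by rw [posL_self]; omega)
  have ha : a = f0 + 1 := by
    refine posL_injective f0 ?_
    by_contra ha
    rw [posL_self_add_one] at ha
    rw [dC_add_one_eq_sub_posL (Nat.pos_of_ne_zero ha)] at h1
    omega
  exact hns ⟨f0, by rw [ha, hb, Sym2.eq_swap]⟩

lemma exteriorD_eq_arc_of_posL_gt (h : posL f0 b < posL f0 a) :
    exteriorD f0 a b = arc b a := by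
  have han := posL_lt f0 a
  rw [exteriorD, if_pos]
  rw [dC_eq_of_posL_lt h, dC_eq_pred_sub_posL, dC_add_one_eq_sub_posL (by omega)]
  omega

lemma exteriorD_eq_preimage_posInterval (hab : a ≠ b) (hns : s(a, b) ∉ stdEdges n) :
    exteriorD f0 a b = posL f0 ⁻¹' posInterval f0 a b := by
  rcases lt_or_gt_of_ne ((posL_injective f0).ne hab) with h | h
  · rw [exteriorD_eq_arc_of_posL_lt h hns, arc_eq_preimage_Icc h.le, posInterval,
      min_eq_left h.le, max_eq_right h.le, Finset.coe_Icc]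
  · rw [exteriorD_eq_arc_of_posL_gt h, arc_eq_preimage_Icc h.le, posInterval,
      min_eq_right h.le, max_eq_left h.le, Finset.coe_Icc]

lemma ncard_exteriorD (hab : a ≠ b) (hns : s(a, b) ∉ stdEdges n) :
    (exteriorD f0 a b).ncard = (posInterval f0 a b).card := by
  rw [exteriorD_eq_preimage_posInterval hab hns,
    Set.ncard_preimage_of_injective_subset_range (posL_injective f0) ?_, Set.ncard_coe_finset]
  rw [range_posL]
  intro k hk
  simp only [posInterval, Finset.coe_Icc, Set.mem_Icc] at hk
  have := posL_lt f0 a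
  have := posL_lt f0 b
  exact Set.mem_Iio.mpr (by omega)

end Exterior

lemma QRel.disjoint_posInterval {n : ℕ} {f0 : ZMod n} {e e' : ZMod n × ZMod n}
    (h : QRel f0 e e') : Disjoint (posInterval f0 e.1 e.2) (posInterval f0 e'.1 e'.2) := by
  obtain ⟨h1, h2, h3, h4⟩ := h
  refine Finset.disjoint_left.mpr fun k hk hk' => ?_
  simp only [posInterval, Finset.mem_Icc] at hk hk'
  omega

lemma IsChainQ.sum_card_posInterval_le {n : ℕ} [NeZero n] {f0 : ZMod n}
    {A : Finset (ZMod n × ZMod n)} (hA : IsChainQ f0 A) :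
    ∑ e ∈ A, (posInterval f0 e.1 e.2).card ≤ n := by
  classical
  rw [← Finset.card_biUnion fun e he e' he' hne => ?_]
  · refine (Finset.card_le_card fun k hk => ?_).trans (Finset.card_range n).le
    obtain ⟨e, -, hk⟩ := Finset.mem_biUnion.mp hk
    simp only [posInterval, Finset.mem_Icc] at hk
    have := posL_lt f0 e.1
    have := posL_lt f0 e.2
    exact Finset.mem_range.mpr (by omega)
  · rcases hA e he e' he' hne with h | h
    exacts [h.disjoint_posInterval, h.disjoint_posInterval.symm]

lemma HasNontrivialCycleOfLength.mono {n : ℕ} {G : SimpleGraph (ZMod n)} {L L' : ℝ}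
    (h : HasNontrivialCycleOfLength G L) (hL : L' ≤ L) : HasNontrivialCycleOfLength G L' :=
  let ⟨w, W, hW, hne, hlen⟩ := h
  ⟨w, W, hW, hne, hL.trans hlen⟩

section ForwardWalk

variable {n : ℕ} {G : SimpleGraph (ZMod n)} (hC : ∀ i : ZMod n, G.Adj i (i + 1))

def forwardWalk : (k : ℕ) → (v : ZMod n) → G.Walk v (v + k)
  | 0, v => SimpleGraph.Walk.nil.copy rfl (by simp)
  | k + 1, v =>
      SimpleGraph.Walk.cons (hC v) ((forwardWalk k (v + 1)).copy rfl (by push_cast; ring))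

@[simp] lemma length_forwardWalk (k : ℕ) (v : ZMod n) : (forwardWalk hC k v).length = k := by
  induction k generalizing v with
  | zero => simp [forwardWalk]
  | succ k ih => simp [forwardWalk, ih]

lemma support_forwardWalk (k : ℕ) (v : ZMod n) :
    (forwardWalk hC k v).support = (List.range (k + 1)).map fun i : ℕ => v + (i : ZMod n) := by
  induction k generalizing v with
  | zero => simp [forwardWalk]
  | succ k ih =>
    rw [List.range_succ_eq_map]
    simp only [forwardWalk, SimpleGraph.Walk.support_cons, SimpleGraph.Walk.support_copy, ih,
      List.map_cons, List.map_map, Nat.cast_zero, add_zero]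
    congr 1
    refine List.map_congr_left fun i _ => ?_
    simp only [Function.comp_apply, Nat.cast_succ]
    ring

lemma mem_stdEdges_of_mem_edges_forwardWalk {k : ℕ} {v : ZMod n} {e : Sym2 (ZMod n)}
    (he : e ∈ (forwardWalk hC k v).edges) : e ∈ stdEdges n := by
  induction k generalizing v with
  | zero => simp [forwardWalk] at he
  | succ k ih =>
    simp only [forwardWalk, SimpleGraph.Walk.edges_cons, SimpleGraph.Walk.edges_copy,
      List.mem_cons] at he
    rcases he with rfl | he
    exacts [⟨v, rfl⟩, ih he]

lemma isPath_forwardWalk [NeZero n] {k : ℕ} (hk : k < n) (v : ZMod n) :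
    (forwardWalk hC k v).IsPath := by
  rw [SimpleGraph.Walk.isPath_def, support_forwardWalk]
  refine List.nodup_range.map_on fun i hi j hj hij => ?_
  rw [List.mem_range] at hi hj
  simpa [ZMod.val_natCast_of_lt (hi.trans_le hk), ZMod.val_natCast_of_lt (hj.trans_le hk)]
    using congrArg ZMod.val (add_left_cancel hij)

end ForwardWalk

lemma hasNontrivialCycleOfLength_of_chord {n : ℕ} [NeZero n] {G : SimpleGraph (ZMod n)}
    (hC : ∀ i : ZMod n, G.Adj i (i + 1)) {x y : ZMod n} (hadj : G.Adj x y)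
    (hns : s(x, y) ∉ stdEdges n) : HasNontrivialCycleOfLength G (dC y x + 1) := by
  have hend : y + (dC y x : ZMod n) = x := by rw [dC, ZMod.natCast_zmod_val]; ring
  let W : G.Walk x x := .cons hadj ((forwardWalk hC (dC y x) y).copy rfl hend)
  refine ⟨x, W, ?_, fun h => hns ?_, by simp [W]⟩
  · rw [SimpleGraph.Walk.cons_isCycle_iff, SimpleGraph.Walk.edges_copy,
      SimpleGraph.Walk.isPath_copy]
    exact ⟨isPath_forwardWalk hC (ZMod.val_lt _) y,
      fun he => hns (mem_stdEdges_of_mem_edges_forwardWalk hC he)⟩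
  · rw [← h]
    simp [W]

lemma hasNontrivialCycleOfLength_of_chord_posInterval {n : ℕ} [NeZero n]
    {G : SimpleGraph (ZMod n)} (hC : ∀ i : ZMod n, G.Adj i (i + 1)) (f0 : ZMod n)
    {a b : ZMod n} (hadj : G.Adj a b) (hns : s(a, b) ∉ stdEdges n) :
    HasNontrivialCycleOfLength G (n + 2 - (posInterval f0 a b).card) := by
  wlog h : posL f0 a < posL f0 b generalizing a b
  · rw [posInterval_comm]
    refine this hadj.symm (by rwa [Sym2.eq_swap]) (lt_of_le_of_ne (not_lt.mp h) fun h' => ?_)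
    exact hadj.ne (posL_injective f0 h').symm
  have hcard : (posInterval f0 a b).card = posL f0 b + 1 - posL f0 a := by
    rw [posInterval, min_eq_left h.le, max_eq_right h.le, Nat.card_Icc]
  have hlen : dC b a + 1 + (posInterval f0 a b).card = n + 2 := by
    have := posL_lt f0 b
    rw [hcard, dC_eq_of_posL_lt h]
    omega
  refine (hasNontrivialCycleOfLength_of_chord hC hadj hns).mono (le_of_eq ?_)
  have hlen' : (dC b a : ℝ) + 1 + (posInterval f0 a b).card = n + 2 := by exact_mod_cast hlen
  linarith

/-- If `Q_S` contains a chain of size `t ≥ 1`, then some chord in this chain has an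
exterior containing at most `n/t` vertices; consequently, `G` contains a nontrivial
cycle of length at least `n - n/t`. -/
theorem small_exterior_of_chain_in_Q
    (n : ℕ) (G : SimpleGraph (ZMod n)) (hn : 3 ≤ n)
    (hC : ∀ i : ZMod n, G.Adj i (i + 1)) (f0 : ZMod n)
    (S : Finset (ZMod n × ZMod n)) (hS : IndepChords G S)
    (t : ℕ) (ht : 1 ≤ t)
    (A : Finset (ZMod n × ZMod n)) (hAS : A ⊆ S)
    (hcard : A.card = t) (hchain : IsChainQ f0 A) :
    (∃ e ∈ A, ((exteriorD f0 e.1 e.2).ncard : ℝ) ≤ (n : ℝ) / (t : ℝ)) ∧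
    HasNontrivialCycleOfLength G ((n : ℝ) - (n : ℝ) / (t : ℝ)) := by
  have : NeZero n := ⟨by omega⟩
  obtain ⟨e, he, hsmall⟩ : ∃ e ∈ A, ((posInterval f0 e.1 e.2).card : ℝ) ≤ n / t := by
    refine Finset.exists_le_of_sum_le (Finset.card_pos.mp (by omega)) ?_
    rw [Finset.sum_const, hcard, nsmul_eq_mul, mul_div_cancel₀ _ (by positivity)]
    exact_mod_cast hchain.sum_card_posInterval_le
  obtain ⟨hadj, hns⟩ := hS.1 e (hAS he)
  refine ⟨⟨e, he, by rwa [ncard_exteriorD hadj.ne hns]⟩, ?_⟩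
  exact (hasNontrivialCycleOfLength_of_chord_posInterval hC f0 hadj hns).mono (by linarith)
end

section
/- Let G be a simple graph on n vertices with a designated Hamiltonian cycle C such that no two chords of G interlace, and suppose G has M ≥ 1 minimal chords. Then the interiors of the minimal domains of distinct minimal chords (a minimal domain minus the two endpoints of its chord) are pairwise disjoint; consequently, some minimal chord of G has a minimal domain containing at most n/M + 2 vertices. -/
/-- The domain `arc a b` of the chord `{a, b}` induces no chords of `G` other than
`{a, b}` itself. -/
def ChordFreeDom {n : ℕ} (G : SimpleGraph (ZMod n)) (a b : ZMod n) : Prop :=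
  ∀ x y, x ∈ arc a b → y ∈ arc a b → IsChordPair G x y → s(x, y) = s(a, b)

/-- `e` is a *minimal* chord of `G`: at least one of its domains induces no chords of
`G` other than `e` itself. -/
def MinimalChord {n : ℕ} (G : SimpleGraph (ZMod n)) (e : Sym2 (ZMod n)) : Prop :=
  ∃ a b, e = s(a, b) ∧ IsChordPair G a b ∧ (ChordFreeDom G a b ∨ ChordFreeDom G b a)


section Helpers

variable {n : ℕ}

lemma dC_self (x : ZMod n) : dC x x = 0 := by simp [dC]

lemma dC_lt [NeZero n] (x y : ZMod n) : dC x y < n := ZMod.val_lt _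

lemma dC_eq_zero_iff [NeZero n] {x y : ZMod n} : dC x y = 0 ↔ x = y := by
  rw [dC, ZMod.val_eq_zero, sub_eq_zero]; exact eq_comm

lemma dC_inj [NeZero n] {a v b : ZMod n} (h : dC a v = dC a b) : v = b := by
  have := ZMod.val_injective n h
  have h2 : v - a + a = b - a + a := by rw [this]
  simpa using h2

lemma dC_tri [NeZero n] (x y z : ZMod n) :
    dC x z = dC x y + dC y z ∨ dC x z + n = dC x y + dC y z := by
  have h : (z - x) = (y - x) + (z - y) := by ring
  have hmod : dC x z = (dC x y + dC y z) % n := by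
    rw [dC, h, ZMod.val_add]; rfl
  rcases Nat.lt_or_ge (dC x y + dC y z) n with h' | h'
  · left; rw [hmod, Nat.mod_eq_of_lt h']
  · right
    have b1 := dC_lt x y; have b2 := dC_lt y z
    rw [hmod, Nat.mod_eq_sub_mod h', Nat.mod_eq_of_lt (by omega)]
    omega

lemma mem_interior_iff [NeZero n] {a b v : ZMod n} :
    v ∈ arc a b \ ({a, b} : Set (ZMod n)) ↔ 0 < dC a v ∧ dC a v < dC a b := by
  constructor
  · rintro ⟨hle, hne⟩
    simp only [Set.mem_insert_iff, Set.mem_singleton_iff, not_or] at hne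
    have h0 : dC a v ≠ 0 := fun h => hne.1 (dC_eq_zero_iff.mp h).symm
    have h1 : dC a v ≠ dC a b := fun h => hne.2 (dC_inj h)
    have hle' : dC a v ≤ dC a b := hle
    exact ⟨by omega, lt_of_le_of_ne hle' h1⟩
  · rintro ⟨h0, h1⟩
    refine ⟨le_of_lt h1, ?_⟩
    simp only [Set.mem_insert_iff, Set.mem_singleton_iff, not_or]
    constructor
    · intro h; rw [h, dC_self] at h0; omega
    · intro h; rw [h] at h1; omega

end Helpers

/-- If no two chords of `G` interlace and `G` has `M ≥ 1` minimal chords, then the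
interiors of the minimal domains of distinct minimal chords (a minimal domain minus the
two endpoints of its chord) are pairwise disjoint; consequently, some minimal chord of
`G` has a minimal domain containing at most `n/M + 2` vertices. -/
theorem minimal_domains_disjoint_and_small
    (n : ℕ) (G : SimpleGraph (ZMod n)) (hn : 3 ≤ n)
    (hC : ∀ i : ZMod n, G.Adj i (i + 1))
    (hnoninter : ∀ a b c d : ZMod n,
      IsChordPair G a b → IsChordPair G c d → ¬ Interlace a b c d)
    (M : ℕ) (hM1 : 1 ≤ M)
    (hM : {e : Sym2 (ZMod n) | MinimalChord G e}.ncard = M) :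
    (∀ a b c d : ZMod n, IsChordPair G a b → IsChordPair G c d →
      ChordFreeDom G a b → ChordFreeDom G c d → s(a, b) ≠ s(c, d) →
      (arc a b \ {a, b}) ∩ (arc c d \ {c, d}) = ∅) ∧
    (∃ a b : ZMod n, IsChordPair G a b ∧ ChordFreeDom G a b ∧
      ((arc a b).ncard : ℝ) ≤ (n : ℝ) / (M : ℝ) + 2) := by

  haveI : NeZero n := ⟨by omega⟩
  have key : ∀ a b c d : ZMod n, IsChordPair G a b → IsChordPair G c d →
      ChordFreeDom G a b → ChordFreeDom G c d → s(a, b) ≠ s(c, d) →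
      (arc a b \ {a, b}) ∩ (arc c d \ {c, d}) = ∅ := by
    intro a b c d hab hcd hfab hfcd hne
    rw [Set.eq_empty_iff_forall_notMem]
    rintro v ⟨hv1, hv2⟩
    have hab' : a ≠ b := hab.1.ne
    have hcd' : c ≠ d := hcd.1.ne
    obtain ⟨hv1a, hv1b⟩ := mem_interior_iff.mp hv1
    obtain ⟨hv2a, hv2b⟩ := mem_interior_iff.mp hv2
    by_cases h1 : dC a c ≤ dC a b ∧ dC a d ≤ dC a b
    · exact hne ((hfab c d h1.1 h1.2 hcd).symm)
    by_cases h2 : dC c a ≤ dC c d ∧ dC c b ≤ dC c d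
    · exact hne (hfcd a b h2.1 h2.2 hab)
    refine hnoninter a b c d hab hcd ?_
    have t1 := dC_tri a c v
    have t2 := dC_tri a c d
    have t3 := dC_tri a b d
    have t4 := dC_tri a b c
    have t5 := dC_tri a b a
    have t6 := dC_tri a c a
    have t7 := dC_tri a c b
    rw [dC_self] at t5 t6
    have p1 : dC a b ≠ 0 := fun h => hab' (dC_eq_zero_iff.mp h)
    have p2 : dC c d ≠ 0 := fun h => hcd' (dC_eq_zero_iff.mp h)
    have b1 := dC_lt a b; have b2 := dC_lt a c; have b3 := dC_lt a d
    have b4 := dC_lt a v; have b5 := dC_lt c v; have b6 := dC_lt c d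
    have b7 := dC_lt b d; have b8 := dC_lt b a; have b9 := dC_lt b c
    have b10 := dC_lt c a; have b11 := dC_lt c b
    unfold Interlace CBtw
    omega
  refine ⟨key, ?_⟩
  set S := {e : Sym2 (ZMod n) | MinimalChord G e} with hSdef
  have hSfin : S.Finite := Set.toFinite S
  have hSne : S.Nonempty := by
    refine (Set.ncard_pos hSfin).mp ?_
    rw [hM]; omega
  have hP : ∀ e ∈ S, ∃ ab : ZMod n × ZMod n,
      e = s(ab.1, ab.2) ∧ IsChordPair G ab.1 ab.2 ∧ ChordFreeDom G ab.1 ab.2 := by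
    intro e he
    obtain ⟨a, b, heq, hchord, hfree⟩ := he
    rcases hfree with h | h
    · exact ⟨(a, b), heq, hchord, h⟩
    · refine ⟨(b, a), ?_, ⟨hchord.1.symm, ?_⟩, h⟩
      · rw [heq, Sym2.eq_swap]
      · rw [show s(b, a) = s(a, b) from Sym2.eq_swap]
        exact hchord.2
  classical
  set f : Sym2 (ZMod n) → ZMod n × ZMod n := fun e =>
    if h : ∃ ab : ZMod n × ZMod n,
        e = s(ab.1, ab.2) ∧ IsChordPair G ab.1 ab.2 ∧ ChordFreeDom G ab.1 ab.2
    then h.choose else (0, 0) with hfdef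
  have hf : ∀ e ∈ S, e = s((f e).1, (f e).2) ∧ IsChordPair G (f e).1 (f e).2 ∧
      ChordFreeDom G (f e).1 (f e).2 := by
    intro e he
    have h := hP e he
    simp only [hfdef, dif_pos h]
    exact h.choose_spec
  set I : Sym2 (ZMod n) → Set (ZMod n) :=
    fun e => arc (f e).1 (f e).2 \ {(f e).1, (f e).2} with hIdef
  set J : Sym2 (ZMod n) → Finset (ZMod n) := fun e => (I e).toFinset with hJdef
  set T : Finset (Sym2 (ZMod n)) := hSfin.toFinset with hTdef
  have hmemT : ∀ e, e ∈ T ↔ e ∈ S := fun e => hSfin.mem_toFinset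
  have hdisj : ∀ e ∈ T, ∀ e' ∈ T, e ≠ e' → Disjoint (J e) (J e') := by
    intro e he e' he' hee
    obtain ⟨hq1, hq2, hq3⟩ := hf e ((hmemT e).mp he)
    obtain ⟨hr1, hr2, hr3⟩ := hf e' ((hmemT e').mp he')
    have hne : s((f e).1, (f e).2) ≠ s((f e').1, (f e').2) := by
      rw [← hq1, ← hr1]; exact hee
    have := key _ _ _ _ hq2 hr2 hq3 hr3 hne
    rw [hJdef]
    exact Set.disjoint_toFinset.mpr (Set.disjoint_iff_inter_eq_empty.mpr this)
  have hsum : ∑ e ∈ T, (J e).card ≤ n := by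
    rw [← Finset.card_biUnion hdisj]
    calc (T.biUnion J).card ≤ Fintype.card (ZMod n) := Finset.card_le_univ _
      _ = n := ZMod.card n
  have hTne : T.Nonempty := hSfin.toFinset_nonempty.mpr hSne
  obtain ⟨e₀, he₀, hmin⟩ := T.exists_min_image (fun e => (J e).card) hTne
  have hTcard : T.card = M := by
    rw [hTdef, ← Set.ncard_eq_toFinset_card S hSfin, hM]
  have hle : M * (J e₀).card ≤ n := by
    calc M * (J e₀).card = ∑ _e ∈ T, (J e₀).card := by
          rw [Finset.sum_const, hTcard, smul_eq_mul]
      _ ≤ ∑ e ∈ T, (J e).card := Finset.sum_le_sum (fun e he => hmin e he)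
      _ ≤ n := hsum
  obtain ⟨hq1, hq2, hq3⟩ := hf e₀ ((hmemT e₀).mp he₀)
  refine ⟨(f e₀).1, (f e₀).2, hq2, hq3, ?_⟩
  have habne : (f e₀).1 ≠ (f e₀).2 := hq2.1.ne
  have hsub : ({(f e₀).1, (f e₀).2} : Set (ZMod n)) ⊆ arc (f e₀).1 (f e₀).2 := by
    rintro x (rfl | rfl)
    · show dC (f e₀).1 (f e₀).1 ≤ _
      rw [dC_self]; exact Nat.zero_le _
    · show dC (f e₀).1 (f e₀).2 ≤ dC (f e₀).1 (f e₀).2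
      exact le_refl _
  have hsplit : (arc (f e₀).1 (f e₀).2).ncard = (I e₀).ncard + 2 := by
    have h := Set.ncard_diff_add_ncard_of_subset hsub (Set.toFinite _)
    rw [Set.ncard_pair habne] at h
    rw [← h, hIdef]
  have hJcard : (J e₀).card = (I e₀).ncard := by
    rw [hJdef, Set.ncard_eq_toFinset_card']
  have hM0 : (0 : ℝ) < (M : ℝ) := by exact_mod_cast hM1
  have h1 : ((I e₀).ncard : ℝ) ≤ (n : ℝ) / (M : ℝ) := by
    rw [le_div_iff₀ hM0]
    have : (I e₀).ncard * M ≤ n := by rw [← hJcard, Nat.mul_comm]; exact hle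
    exact_mod_cast this
  rw [hsplit]
  push_cast
  linarith
end
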